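/- arXiv:2106.13690 — 3 statements merged into one kernel-verified Lean document; each statement's English description precedes it below -/
import Mathlib

section
/- Let φ : ℝ → ℝ be a strictly convex self-concordant function with constant 2. Then for all t with 0 ≤ t < φ''(0)^{-1/2}, φ(t) ≤ φ(0) + t φ'(0) - t φ''(0)^{1/2} - log(1 - t φ''(0)^{1/2}). -/
/-- upper bound on a strictly convex self-concordant function. -/
theorem self_concordant_upper_bound (φ : ℝ → ℝ) (hsmooth : ContDiff ℝ 3 φ)
    (hpos : ∀ t : ℝ, 0 < iteratedDeriv 2 φ t)
    (hsc : ∀ t : ℝ, |iteratedDeriv 3 φ t| ≤ 2 * (iteratedDeriv 2 φ t) ^ ((3 : ℝ) / 2)) :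
    ∀ t : ℝ, 0 ≤ t → t < (Real.sqrt (iteratedDeriv 2 φ 0))⁻¹ →
      φ t ≤ φ 0 + t * deriv φ 0 - t * Real.sqrt (iteratedDeriv 2 φ 0) -
        Real.log (1 - t * Real.sqrt (iteratedDeriv 2 φ 0)) := by
  intro t0 ht0 ht0'
  set f2 : ℝ → ℝ := iteratedDeriv 2 φ with hf2def
  set f3 : ℝ → ℝ := iteratedDeriv 3 φ with hf3def
  set s : ℝ := Real.sqrt (f2 0) with hsdef
  have hs : 0 < s := Real.sqrt_pos.mpr (hpos 0)
  obtain ⟨hcontAll, hdiffAll⟩ := contDiff_nat_iff_iteratedDeriv.mp hsmooth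
  have hd2 : Differentiable ℝ f2 := hdiffAll 2 (by norm_num)
  have hd1 : Differentiable ℝ (deriv φ) := by
    have := hdiffAll 1 (by norm_num); rwa [iteratedDeriv_one] at this
  have hderiv2 : ∀ t, deriv f2 t = f3 t := by
    intro t
    have : f3 = deriv f2 := by rw [hf3def, hf2def]; exact iteratedDeriv_succ
    rw [this]
  have hderiv1 : ∀ t, deriv (deriv φ) t = f2 t := by
    intro t
    have : f2 = deriv (deriv φ) := by
      rw [hf2def, iteratedDeriv_succ, iteratedDeriv_one]
    rw [this]
  -- sqrt positivity
  have hsq : ∀ t, 0 < Real.sqrt (f2 t) := fun t => Real.sqrt_pos.mpr (hpos t)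
  have hx32 : ∀ x : ℝ, 0 < x → x ^ ((3:ℝ)/2) = Real.sqrt x * x := by
    intro x hx
    rw [show (3:ℝ)/2 = 1/2 + 1 by ring, Real.rpow_add hx, Real.rpow_one, ← Real.sqrt_eq_rpow]
  -- g = (sqrt ∘ f2)⁻¹ has derivative bounded by 1
  set g : ℝ → ℝ := fun t => (Real.sqrt (f2 t))⁻¹ with hgdef
  have hg : ∀ t, HasDerivAt g (-(f3 t / (2 * Real.sqrt (f2 t))) / (f2 t)) t := by
    intro t
    have h1 : HasDerivAt f2 (f3 t) t := by
      have := (hd2 t).hasDerivAt; rwa [hderiv2 t] at this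
    have h2 : HasDerivAt (fun u => Real.sqrt (f2 u)) (f3 t / (2 * Real.sqrt (f2 t))) t := by
      have := (Real.hasDerivAt_sqrt (ne_of_gt (hpos t))).comp t h1
      exact this.congr_deriv (by ring)
    have h3 := h2.inv (ne_of_gt (hsq t))
    exact h3.congr_deriv (by rw [Real.sq_sqrt (le_of_lt (hpos t))])
  have hgbound : ∀ t, |(-(f3 t / (2 * Real.sqrt (f2 t))) / (f2 t))| ≤ 1 := by
    intro t
    have h32 := hx32 (f2 t) (hpos t)
    rw [abs_div, abs_neg, abs_div]
    rw [abs_of_pos (hpos t), abs_of_pos (mul_pos two_pos (hsq t))]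
    rw [div_div, div_le_one (mul_pos (mul_pos two_pos (hsq t)) (hpos t))]
    calc |f3 t| ≤ 2 * (f2 t) ^ ((3:ℝ)/2) := hsc t
      _ = 2 * Real.sqrt (f2 t) * f2 t := by rw [h32]; ring
  -- Lipschitz estimate on [0, t0]
  have hlip : ∀ x ∈ Set.Icc (0:ℝ) t0, |g x - g 0| ≤ x := by
    intro x hx
    have := norm_image_sub_le_of_norm_deriv_le_segment'
      (f' := fun t => -(f3 t / (2 * Real.sqrt (f2 t))) / (f2 t)) (f := g) (C := 1)
      (fun y _ => (hg y).hasDerivWithinAt) (fun y _ => hgbound y) x hx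
    simpa using this
  -- key second-derivative comparison
  have hone : ∀ x ∈ Set.Icc (0:ℝ) t0, 0 < 1 - x * s := by
    intro x hx
    have hxs : x * s < 1 := by
      have : x * s ≤ t0 * s := by nlinarith [hx.2, hs.le]
      have h2 : t0 * s < s⁻¹ * s := by nlinarith [hs]
      rw [inv_mul_cancel₀ (ne_of_gt hs)] at h2
      linarith
    linarith
  have hcomp : ∀ x ∈ Set.Icc (0:ℝ) t0, f2 x ≤ s^2 / (1 - x * s)^2 := by
    intro x hx
    have hginv : g 0 = s⁻¹ := by rw [hgdef]
    have hglow : s⁻¹ - x ≤ g x := by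
      have := hlip x hx
      have := abs_le.mp this
      rw [hginv] at this
      linarith [this.1]
    have hpos' : 0 < s⁻¹ - x := by
      have := hone x hx
      have : (1 - x * s) / s > 0 := div_pos this hs
      calc (0:ℝ) < (1 - x*s)/s := this
        _ = s⁻¹ - x := by field_simp
    have hgx : 0 < g x := inv_pos.mpr (hsq x)
    have hsqle : Real.sqrt (f2 x) ≤ (s⁻¹ - x)⁻¹ := by
      have : (g x)⁻¹ ≤ (s⁻¹ - x)⁻¹ := by
        apply inv_anti₀ hpos' hglow
      rwa [hgdef, inv_inv] at this
    have heq : (s⁻¹ - x)⁻¹ = s / (1 - x * s) := by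
      rw [show s⁻¹ - x = (1 - x * s)/s by field_simp, inv_div]
    have hsqle2 : Real.sqrt (f2 x) ≤ s / (1 - x * s) := heq ▸ hsqle
    calc f2 x = (Real.sqrt (f2 x))^2 := (Real.sq_sqrt (hpos x).le).symm
      _ ≤ (s / (1 - x*s))^2 := by nlinarith [hsq x, hsqle2]
      _ = s^2 / (1 - x*s)^2 := by rw [div_pow]
  -- first comparison: G1 ≥ 0 on [0,t0]
  set G1 : ℝ → ℝ := fun t => deriv φ 0 - s + s / (1 - t * s) - deriv φ t with hG1def
  have hG1d : ∀ x ∈ Set.Icc (0:ℝ) t0, HasDerivAt G1 (s^2/(1 - x*s)^2 - f2 x) x := by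
    intro x hx
    have h1 : HasDerivAt (fun t : ℝ => 1 - t * s) (-s) x := by
      simpa using ((hasDerivAt_id x).mul_const s).const_sub 1
    have h2 : HasDerivAt (fun t : ℝ => s / (1 - t * s)) (s^2/(1 - x*s)^2) x := by
      have := (h1.inv (ne_of_gt (hone x hx))).const_mul s
      exact this.congr_deriv (by ring)
    have h3 : HasDerivAt (deriv φ) (f2 x) x := by
      have := (hd1 x).hasDerivAt; rwa [hderiv1 x] at this
    exact ((h2.const_add (deriv φ 0 - s)).sub h3)
  have hG1cont : ContinuousOn G1 (Set.Icc 0 t0) :=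
    fun x hx => ((hG1d x hx).continuousAt).continuousWithinAt
  have hG1mono : MonotoneOn G1 (Set.Icc 0 t0) := by
    apply monotoneOn_of_deriv_nonneg (convex_Icc 0 t0) hG1cont
    · intro x hx
      rw [interior_Icc] at hx
      exact (hG1d x (Set.Ioo_subset_Icc_self hx)).differentiableAt.differentiableWithinAt
    · intro x hx
      rw [interior_Icc] at hx
      have hx' := Set.Ioo_subset_Icc_self hx
      rw [(hG1d x hx').deriv]
      have := hcomp x hx'
      linarith
  have hG1nonneg : ∀ x ∈ Set.Icc (0:ℝ) t0, 0 ≤ G1 x := by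
    intro x hx
    have h0 : G1 0 = 0 := by rw [hG1def]; simp
    have := hG1mono (Set.left_mem_Icc.mpr ht0) hx hx.1
    linarith
  -- second comparison
  set G : ℝ → ℝ := fun t => φ 0 + t * deriv φ 0 - t * s - Real.log (1 - t * s) - φ t with hGdef
  have hGd : ∀ x ∈ Set.Icc (0:ℝ) t0, HasDerivAt G (G1 x) x := by
    intro x hx
    have h1 : HasDerivAt (fun t : ℝ => 1 - t * s) (-s) x := by
      simpa using ((hasDerivAt_id x).mul_const s).const_sub 1
    have hlog : HasDerivAt (fun t : ℝ => Real.log (1 - t * s)) (-s / (1 - x*s)) x := by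
      have := (Real.hasDerivAt_log (ne_of_gt (hone x hx))).comp x h1
      exact this.congr_deriv (by ring)
    have hphi : HasDerivAt φ (deriv φ x) x := ((hsmooth.differentiable (by norm_num)) x).hasDerivAt
    have hlin : HasDerivAt (fun t : ℝ => φ 0 + t * deriv φ 0 - t * s) (deriv φ 0 - s) x := by
      exact ((((hasDerivAt_id x).mul_const (deriv φ 0)).const_add (φ 0)).sub
        ((hasDerivAt_id x).mul_const s)).congr_deriv (by ring)
    have := (hlin.sub hlog).sub hphi
    exact this.congr_deriv (by simp only [hG1def]; ring)
  have hGcont : ContinuousOn G (Set.Icc 0 t0) :=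
    fun x hx => ((hGd x hx).continuousAt).continuousWithinAt
  have hGmono : MonotoneOn G (Set.Icc 0 t0) := by
    apply monotoneOn_of_deriv_nonneg (convex_Icc 0 t0) hGcont
    · intro x hx
      rw [interior_Icc] at hx
      exact (hGd x (Set.Ioo_subset_Icc_self hx)).differentiableAt.differentiableWithinAt
    · intro x hx
      rw [interior_Icc] at hx
      have hx' := Set.Ioo_subset_Icc_self hx
      rw [(hGd x hx').deriv]
      exact hG1nonneg x hx'
  have h0 : G 0 = 0 := by rw [hGdef]; simp
  have hfin := hGmono (Set.left_mem_Icc.mpr ht0) (Set.right_mem_Icc.mpr ht0) ht0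
  rw [h0] at hfin
  rw [hGdef] at hfin
  simp only at hfin
  linarith
end

section
/- Let φ : ℝ → ℝ be a strictly convex self-concordant function with constant 2. Then for all t ≥ 0 in dom φ, φ(t) ≥ φ(0) + t φ'(0) + t φ''(0)^{1/2} - log(1 + t φ''(0)^{1/2}). -/
/-- lower bound on a strictly convex self-concordant function. -/
theorem self_concordant_lower_bound (φ : ℝ → ℝ) (hsmooth : ContDiff ℝ 3 φ)
    (hpos : ∀ t : ℝ, 0 < iteratedDeriv 2 φ t)
    (hsc : ∀ t : ℝ, |iteratedDeriv 3 φ t| ≤ 2 * (iteratedDeriv 2 φ t) ^ ((3 : ℝ) / 2)) :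
    ∀ t : ℝ, 0 ≤ t →
      φ 0 + t * deriv φ 0 + t * Real.sqrt (iteratedDeriv 2 φ 0) -
        Real.log (1 + t * Real.sqrt (iteratedDeriv 2 φ 0)) ≤ φ t := by
  intro t ht
  set u := iteratedDeriv 2 φ with hu
  have hu2 : u = deriv (deriv φ) := by
    rw [hu, iteratedDeriv_succ, iteratedDeriv_one]
  have hφd : Differentiable ℝ φ := hsmooth.differentiable (by norm_num)
  have hφ'd : Differentiable ℝ (deriv φ) := by
    have h := hsmooth.differentiable_iteratedDeriv 1 (by norm_num)
    rwa [iteratedDeriv_one] at h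
  have hud : Differentiable ℝ u := hsmooth.differentiable_iteratedDeriv 2 (by norm_num)
  have huder : ∀ x : ℝ, HasDerivAt (deriv φ) (u x) x := by
    intro x
    have h := (hφ'd x).hasDerivAt
    rw [hu2]; exact h
  have h3der : ∀ x : ℝ, HasDerivAt u (iteratedDeriv 3 φ x) x := by
    intro x
    have h := (hud x).hasDerivAt
    rw [show (3 : ℕ) = 2 + 1 from rfl, iteratedDeriv_succ]
    exact h
  set a := Real.sqrt (u 0) with ha_def
  have ha : 0 < a := Real.sqrt_pos.mpr (hpos 0)
  have hs : ∀ x : ℝ, 0 < Real.sqrt (u x) := fun x => Real.sqrt_pos.mpr (hpos x)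
  -- the function f x = (sqrt (u x))⁻¹ has derivative of absolute value ≤ 1
  set f : ℝ → ℝ := fun x => (Real.sqrt (u x))⁻¹ with hf_def
  have hfder : ∀ x : ℝ, HasDerivAt f
      (-(1 / (2 * Real.sqrt (u x)) * iteratedDeriv 3 φ x) / (Real.sqrt (u x)) ^ 2) x := by
    intro x
    exact ((Real.hasDerivAt_sqrt (hpos x).ne').comp x (h3der x)).inv (hs x).ne'
  have hcube : ∀ x : ℝ, (u x) ^ ((3 : ℝ) / 2) = (Real.sqrt (u x)) ^ 3 := by
    intro x
    rw [Real.sqrt_eq_rpow, ← Real.rpow_natCast ((u x) ^ ((1 : ℝ) / 2)) 3,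
      ← Real.rpow_mul (hpos x).le]
    norm_num
  have hfbound : ∀ x : ℝ,
      |(-(1 / (2 * Real.sqrt (u x)) * iteratedDeriv 3 φ x) / (Real.sqrt (u x)) ^ 2)| ≤ 1 := by
    intro x
    have hsx := hs x
    have hb := hsc x
    rw [hcube x] at hb
    rw [abs_div, abs_neg, abs_mul, abs_of_pos (by positivity : (0:ℝ) < 1 / (2 * Real.sqrt (u x))),
      abs_of_pos (by positivity : (0:ℝ) < (Real.sqrt (u x)) ^ 2)]
    rw [div_le_one (by positivity)]
    calc 1 / (2 * Real.sqrt (u x)) * |iteratedDeriv 3 φ x|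
        ≤ 1 / (2 * Real.sqrt (u x)) * (2 * Real.sqrt (u x) ^ 3) := by
          apply mul_le_mul_of_nonneg_left hb (by positivity)
      _ = Real.sqrt (u x) ^ 2 := by field_simp
  -- g x = x - f x is monotone
  have hg : Monotone (fun x => x - f x) := by
    apply monotone_of_deriv_nonneg
    · exact fun x => (differentiable_id.differentiableAt).sub (hfder x).differentiableAt
    · intro x
      have hd : HasDerivAt (fun x => x - f x)
          (1 - (-(1 / (2 * Real.sqrt (u x)) * iteratedDeriv 3 φ x) / (Real.sqrt (u x)) ^ 2)) x :=
        (hasDerivAt_id x).sub (hfder x)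
      rw [hd.deriv]
      have := abs_le.mp (hfbound x)
      linarith [this.2]
  -- hence f x ≤ f 0 + x for x ≥ 0
  have hA : ∀ x : ℝ, 0 ≤ x → (Real.sqrt (u x))⁻¹ ≤ a⁻¹ + x := by
    intro x hx
    have := hg hx
    simp only [hf_def] at this ⊢
    rw [ha_def]
    linarith [this]
  -- key bound : u x ≥ a^2 / (1 + x a)^2 for x ≥ 0
  have hkey : ∀ x : ℝ, 0 ≤ x → a ^ 2 / (1 + x * a) ^ 2 ≤ u x := by
    intro x hx
    have hsx := hs x
    have hfx := hA x hx
    have h1pos : (0:ℝ) < 1 + x * a := by positivity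
    have e1 : Real.sqrt (u x) * (Real.sqrt (u x))⁻¹ = 1 := mul_inv_cancel₀ hsx.ne'
    have e2 : a * a⁻¹ = 1 := mul_inv_cancel₀ ha.ne'
    have h1 : a ≤ (1 + x * a) * Real.sqrt (u x) := by
      have hmul := mul_le_mul_of_nonneg_left hfx (mul_pos ha hsx).le
      nlinarith [hmul, e1, e2, hsx, ha]
    have h2 : a ^ 2 ≤ (1 + x * a) ^ 2 * u x := by
      have hsq : Real.sqrt (u x) ^ 2 = u x := Real.sq_sqrt (hpos x).le
      nlinarith [h1, ha.le, hsq, mul_pos h1pos hsx]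
    rw [div_le_iff₀ (by positivity)]
    linarith [h2]
  -- G : first integrated inequality
  set G : ℝ → ℝ := fun x => deriv φ x - deriv φ 0 - a + a / (1 + x * a) with hG_def
  have hGder : ∀ x : ℝ, 0 < 1 + x * a → HasDerivAt G (u x - a ^ 2 / (1 + x * a) ^ 2) x := by
    intro x hx
    have hlin : HasDerivAt (fun y : ℝ => 1 + y * a) a x := by
      simpa using ((hasDerivAt_id x).mul_const a).const_add 1
    have hinv : HasDerivAt (fun y : ℝ => a / (1 + y * a)) (a * (-a / (1 + x * a) ^ 2)) x := by
      simpa [div_eq_mul_inv] using (hlin.inv hx.ne').const_mul a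
    have h : HasDerivAt (fun y => deriv φ y - deriv φ 0 - a + a / (1 + y * a))
        (u x + a * (-a / (1 + x * a) ^ 2)) x :=
      (((huder x).sub_const (deriv φ 0)).sub_const a).add hinv
    convert h using 1
    ring
  have hGmono : MonotoneOn G (Set.Ici 0) := by
    apply monotoneOn_of_deriv_nonneg (convex_Ici 0)
    · intro x hx
      have hx' : (0:ℝ) < 1 + x * a := by
        have : (0:ℝ) ≤ x := hx
        positivity
      exact (hGder x hx').differentiableAt.continuousAt.continuousWithinAt
    · rw [interior_Ici]
      intro x hx
      have hx' : (0:ℝ) < 1 + x * a := by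
        have : (0:ℝ) < x := hx
        positivity
      exact (hGder x hx').differentiableAt.differentiableWithinAt
    · rw [interior_Ici]
      intro x hx
      have hxle : (0:ℝ) ≤ x := le_of_lt hx
      have hx' : (0:ℝ) < 1 + x * a := by positivity
      rw [(hGder x hx').deriv]
      linarith [hkey x hxle]
  have hG0 : G 0 = 0 := by simp [hG_def]
  have hG : ∀ x : ℝ, 0 ≤ x → 0 ≤ G x := by
    intro x hx
    have := hGmono (Set.self_mem_Ici) hx hx
    rwa [hG0] at this
  -- F : second integrated inequality
  set F : ℝ → ℝ := fun x => φ x - φ 0 - x * deriv φ 0 - x * a + Real.log (1 + x * a) with hF_def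
  have hFder : ∀ x : ℝ, 0 < 1 + x * a → HasDerivAt F (G x) x := by
    intro x hx
    have hlin : HasDerivAt (fun y : ℝ => 1 + y * a) a x := by
      simpa using ((hasDerivAt_id x).mul_const a).const_add 1
    have hlog : HasDerivAt (fun y : ℝ => Real.log (1 + y * a)) (a / (1 + x * a)) x :=
      hlin.log hx.ne'
    have h1 : HasDerivAt (fun y : ℝ => y * deriv φ 0) (deriv φ 0) x := by
      simpa using (hasDerivAt_id x).mul_const (deriv φ 0)
    have h2 : HasDerivAt (fun y : ℝ => y * a) a x := by
      simpa using (hasDerivAt_id x).mul_const a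
    exact ((((hφd x).hasDerivAt.sub_const (φ 0)).sub h1).sub h2).add hlog
  have hFmono : MonotoneOn F (Set.Ici 0) := by
    apply monotoneOn_of_deriv_nonneg (convex_Ici 0)
    · intro x hx
      have hxle : (0:ℝ) ≤ x := hx
      have hx' : (0:ℝ) < 1 + x * a := by positivity
      exact (hFder x hx').differentiableAt.continuousAt.continuousWithinAt
    · rw [interior_Ici]
      intro x hx
      have hxle : (0:ℝ) ≤ x := le_of_lt hx
      have hx' : (0:ℝ) < 1 + x * a := by positivity
      exact (hFder x hx').differentiableAt.differentiableWithinAt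
    · rw [interior_Ici]
      intro x hx
      have hxle : (0:ℝ) ≤ x := le_of_lt hx
      have hx' : (0:ℝ) < 1 + x * a := by positivity
      rw [(hFder x hx').deriv]
      exact hG x hxle
  have hF0 : F 0 = 0 := by simp [hF_def]
  have hFt : 0 ≤ F t := by
    have := hFmono (Set.self_mem_Ici) ht ht
    rwa [hF0] at this
  simp only [hF_def] at hFt
  linarith [hFt]
end

section
/- Let H be symmetric positive definite (N×N), P be N×n of full column rank, g ∈ ℝ^N, coarse direction d̂ = -P(Pᵀ H P)^{-1}Pᵀ g, Newton direction d = -H^{-1} g, λ̂² = (Pᵀg)ᵀ(PᵀHP)^{-1}Pᵀg, λ² = gᵀH^{-1}g. Then ‖H^{1/2}(d̂ - d)‖₂ = √(λ² - λ̂²). -/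
open Matrix


namespace Matrix.PosSemidef

open scoped ComplexOrder

/-- The square root of a positive semidefinite matrix, as defined in Mathlib of December 2024
(removed from Mathlib since). -/
noncomputable def sqrt {n 𝕜 : Type*} [Fintype n] [DecidableEq n] [RCLike 𝕜]
    {A : Matrix n n 𝕜} (hA : A.PosSemidef) : Matrix n n 𝕜 :=
  hA.1.eigenvectorUnitary.1 * diagonal ((↑) ∘ (√·) ∘ hA.1.eigenvalues) *
    (star hA.1.eigenvectorUnitary : Matrix n n 𝕜)


lemma posSemidef_sqrt {n 𝕜 : Type*} [Fintype n] [DecidableEq n] [RCLike 𝕜]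
    {A : Matrix n n 𝕜} (hA : A.PosSemidef) : PosSemidef hA.sqrt := by
  unfold sqrt
  rw [star_eq_conjTranspose]
  apply PosSemidef.mul_mul_conjTranspose_same
  refine posSemidef_diagonal_iff.mpr fun i ↦ ?_
  rw [Function.comp_apply, RCLike.nonneg_iff]
  constructor
  · simp only [RCLike.ofReal_re]
    exact Real.sqrt_nonneg _
  · simp only [RCLike.ofReal_im]

lemma sqrt_mul_self {n 𝕜 : Type*} [Fintype n] [DecidableEq n] [RCLike 𝕜]
    {A : Matrix n n 𝕜} (hA : A.PosSemidef) : hA.sqrt * hA.sqrt = A := by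
  conv_rhs => rw [hA.1.spectral_theorem, Unitary.conjStarAlgAut_apply]
  unfold sqrt
  have hU : (star hA.1.eigenvectorUnitary : Matrix n n 𝕜) * hA.1.eigenvectorUnitary.1 = 1 :=
    Unitary.coe_star_mul_self _
  have hD : diagonal ((↑) ∘ (√·) ∘ hA.1.eigenvalues) * diagonal ((↑) ∘ (√·) ∘ hA.1.eigenvalues)
      = diagonal (RCLike.ofReal ∘ hA.1.eigenvalues : n → 𝕜) := by
    rw [diagonal_mul_diagonal]
    congr 1
    funext i
    simp only [Function.comp_apply]
    rw [← RCLike.ofReal_mul, Real.mul_self_sqrt (hA.eigenvalues_nonneg i)]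
  calc _ = hA.1.eigenvectorUnitary.1 * diagonal ((↑) ∘ (√·) ∘ hA.1.eigenvalues) *
        ((star hA.1.eigenvectorUnitary : Matrix n n 𝕜) * hA.1.eigenvectorUnitary.1) *
        diagonal ((↑) ∘ (√·) ∘ hA.1.eigenvalues) *
        (star hA.1.eigenvectorUnitary : Matrix n n 𝕜) := by simp only [Matrix.mul_assoc]
    _ = _ := by rw [hU, Matrix.mul_one, Matrix.mul_assoc _ (diagonal _) (diagonal _), hD]

end Matrix.PosSemidef

/-- Symmetric matrix moves across dot product. -/
private lemma dot_symm_move {N : ℕ} (A : Matrix (Fin N) (Fin N) ℝ) (hA : Aᵀ = A)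
    (x z : Fin N → ℝ) : x ⬝ᵥ (A *ᵥ z) = (A *ᵥ x) ⬝ᵥ z := by
  rw [dotProduct_mulVec, ← vecMul_transpose, hA]

private lemma mulVec_dot {N n : ℕ} (A : Matrix (Fin N) (Fin n) ℝ)
    (x : Fin n → ℝ) (z : Fin N → ℝ) : (A *ᵥ x) ⬝ᵥ z = x ⬝ᵥ (Aᵀ *ᵥ z) := by
  rw [dotProduct_comm, dotProduct_mulVec, ← mulVec_transpose, dotProduct_comm]

/-- `‖H^{1/2}(d̂ - d)‖₂ = √(λ² - λ̂²)`. -/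
theorem norm_diff_directions_eq {N n : ℕ} (H : Matrix (Fin N) (Fin N) ℝ)
    (P : Matrix (Fin N) (Fin n) ℝ) (g : Fin N → ℝ) (hH : H.PosDef) (hP : P.rank = n)
    (dhat d : Fin N → ℝ)
    (hdhat : dhat = -(P *ᵥ ((Pᵀ * H * P)⁻¹ *ᵥ (Pᵀ *ᵥ g))))
    (hd : d = -(H⁻¹ *ᵥ g))
    (lamhat_sq lam_sq : ℝ)
    (hlamhat : lamhat_sq = (Pᵀ *ᵥ g) ⬝ᵥ ((Pᵀ * H * P)⁻¹ *ᵥ (Pᵀ *ᵥ g)))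
    (hlam : lam_sq = g ⬝ᵥ (H⁻¹ *ᵥ g))
    (v : Fin N → ℝ) (hv : v = hH.posSemidef.sqrt *ᵥ (dhat - d)) :
    Real.sqrt (v ⬝ᵥ v) = Real.sqrt (lam_sq - lamhat_sq) := by
  -- injectivity of mulVec P
  have hPinj : Function.Injective P.mulVec := by
    have hrn : Module.finrank ℝ (LinearMap.range P.mulVecLin) +
        Module.finrank ℝ (LinearMap.ker P.mulVecLin) = n := by
      simpa using P.mulVecLin.finrank_range_add_finrank_ker
    rw [Matrix.rank] at hP
    have hker0 : Module.finrank ℝ (LinearMap.ker P.mulVecLin) = 0 := by omega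
    have hker : LinearMap.ker P.mulVecLin = ⊥ := Submodule.finrank_eq_zero.mp hker0
    have := LinearMap.ker_eq_bot.mp hker
    intro a b hab
    exact this (by simpa [Matrix.mulVecLin_apply] using hab)
  -- P^T H P is positive definite
  have hM : (Pᵀ * H * P).PosDef := by
    refine Matrix.PosDef.of_dotProduct_mulVec_pos ?_ ?_
    · have := Matrix.isHermitian_conjTranspose_mul_mul P hH.1
      simpa [Matrix.conjTranspose_eq_transpose_of_trivial] using this
    · intro x hx
      have hPx : P *ᵥ x ≠ 0 := fun h => hx (hPinj (by simpa using h))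
      have hpos := hH.dotProduct_mulVec_pos hPx
      have : x ⬝ᵥ ((Pᵀ * H * P) *ᵥ x) = (P *ᵥ x) ⬝ᵥ (H *ᵥ (P *ᵥ x)) := by
        rw [← mulVec_mulVec, ← mulVec_mulVec, mulVec_dot]
      simpa [star_trivial, this] using hpos
  haveI := hH.isUnit.invertible
  haveI := hM.isUnit.invertible
  have hHsym : Hᵀ = H := by
    have := hH.1
    simpa [Matrix.IsHermitian, Matrix.conjTranspose_eq_transpose_of_trivial] using this
  set S := hH.posSemidef.sqrt with hSdef
  have hSsym : Sᵀ = S := by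
    have := (Matrix.PosSemidef.posSemidef_sqrt hH.posSemidef).1
    simpa [Matrix.IsHermitian, Matrix.conjTranspose_eq_transpose_of_trivial] using this
  have hSS : S * S = H := hH.posSemidef.sqrt_mul_self
  set w : Fin n → ℝ := Pᵀ *ᵥ g with hw
  set y : Fin n → ℝ := (Pᵀ * H * P)⁻¹ *ᵥ w with hy
  have hu : dhat - d = H⁻¹ *ᵥ g - P *ᵥ y := by
    rw [hdhat, hd]; rw [neg_sub_neg]
  -- v ⬝ v = u ⬝ H u
  have hvv : v ⬝ᵥ v = (dhat - d) ⬝ᵥ (H *ᵥ (dhat - d)) := by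
    rw [hv, ← hSS, ← mulVec_mulVec, dot_symm_move S hSsym, dotProduct_comm]
  have hHinvg : H *ᵥ (H⁻¹ *ᵥ g) = g := by
    rw [mulVec_mulVec, Matrix.mul_inv_of_invertible, one_mulVec]
  have hMy : (Pᵀ * H * P) *ᵥ y = w := by
    rw [hy, mulVec_mulVec, Matrix.mul_inv_of_invertible, one_mulVec]
  have hgPy : g ⬝ᵥ (P *ᵥ y) = w ⬝ᵥ y := by
    rw [dotProduct_comm, mulVec_dot, hw, dotProduct_comm]
  have p4 : (P *ᵥ y) ⬝ᵥ (H *ᵥ (P *ᵥ y)) = w ⬝ᵥ y := by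
    rw [mulVec_dot, mulVec_mulVec, mulVec_mulVec, hMy, dotProduct_comm]
  have p2 : (H⁻¹ *ᵥ g) ⬝ᵥ (H *ᵥ (P *ᵥ y)) = w ⬝ᵥ y := by
    rw [dot_symm_move H hHsym, hHinvg, hgPy]
  have p3 : (P *ᵥ y) ⬝ᵥ g = w ⬝ᵥ y := by rw [dotProduct_comm, hgPy]
  have p1 : (H⁻¹ *ᵥ g) ⬝ᵥ g = lam_sq := by rw [hlam, dotProduct_comm]
  congr 1
  rw [hvv, hu, mulVec_sub, hHinvg, sub_dotProduct, dotProduct_sub, dotProduct_sub,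
    p1, p2, p3, p4, hlamhat]
  ring
end
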